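/- A pair (s1, s2) of distinct states of a complete observable FSM S is adaptively homing if and only if the initial state (s1,s2) does not belong to the greatest input-closed subset of states of the intersection FSM S/s1 ∩ S/s2. -/

import Mathlib

/-- A (non-initialized) finite state machine with transition relation `h ⊆ S × I × O × S`. -/
structure FSM (S I O : Type) where
  h : S → I → O → S → Prop

namespace FSM

variable {S I O Q : Type}

/-- `M` is complete: every input is defined at every state. -/
def Complete (M : FSM S I O) : Prop := ∀ s i, ∃ o s', M.h s i o s'

/-- `M` is observable: the `io`-successor of a state is unique when it exists. -/
def Observable (M : FSM S I O) : Prop :=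
  ∀ s i o t₁ t₂, M.h s i o t₁ → M.h s i o t₂ → t₁ = t₂

/-- `M.Runs s γ t` : `t` is reached from `s` along the trace `γ` (a list of input/output pairs). -/
inductive Runs (M : FSM S I O) : S → List (I × O) → S → Prop
  | nil (s : S) : Runs M s [] s
  | cons {s : S} {i : I} {o : O} {s' : S} {γ : List (I × O)} {t : S} :
      M.h s i o s' → Runs M s' γ t → Runs M s ((i, o) :: γ) t

/-- A deadlock state has no outgoing transitions. -/
def Deadlock (M : FSM S I O) (q : S) : Prop := ∀ i o q', ¬ M.h q i o q'

/-- A test case: initially connected, single-input, output-complete, observable,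
acyclic initialized FSM. -/
structure IsTestCase (P : FSM Q I O) (q0 : Q) : Prop where
  singleInput : ∀ q i₁ o₁ q₁ i₂ o₂ q₂, P.h q i₁ o₁ q₁ → P.h q i₂ o₂ q₂ → i₁ = i₂
  outputComplete : ∀ q i o q', P.h q i o q' → ∀ o', ∃ q'', P.h q i o' q''
  observable : P.Observable
  acyclic : ∀ q γ, γ ≠ ([] : List (I × O)) → ¬ P.Runs q γ q
  connected : ∀ q, ∃ γ, P.Runs q0 γ q

/-- `P` (with initial state `q0`) is a homing test case for the set `S'` of states of `M`:
for every trace from `q0` to a deadlock state, the successors of all states of `S'`,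
where they exist, coincide in a single state. -/
def IsHomingFor (M : FSM S I O) (S' : Set S) (P : FSM Q I O) (q0 : Q) : Prop :=
  ∀ γ q, P.Runs q0 γ q → P.Deadlock q →
    ∃ s : S, ∀ s' ∈ S', ∀ t, M.Runs s' γ t → t = s

/-- The set `S'` of states of `M` is adaptively homing: some (finite) homing test case exists. -/
def AdaptivelyHomingSet (M : FSM S I O) (S' : Set S) : Prop :=
  ∃ (Q : Type) (_ : Fintype Q) (P : FSM Q I O) (q0 : Q),
    P.IsTestCase q0 ∧ IsHomingFor M S' P q0

/-- The pair `(s₁, s₂)` is adaptively homing. -/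
def AdaptivelyHomingPair (M : FSM S I O) (s₁ s₂ : S) : Prop :=
  AdaptivelyHomingSet M {s₁, s₂}

/-- The intersection FSM `S/s₁ ∩ S/s₂`: states are pairs of states of `M`, and there is a
transition iff both components have the corresponding transition and the successors differ. -/
def inter (M : FSM S I O) : FSM (S × S) I O :=
  ⟨fun p i o p' => M.h p.1 i o p'.1 ∧ M.h p.2 i o p'.2 ∧ p'.1 ≠ p'.2⟩

/-- A set `A` of states is input-closed in `M`: from every state of `A` every input has at
least one transition leading back into `A`. -/
def InputClosed (M : FSM S I O) (A : Set S) : Prop :=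
  ∀ q ∈ A, ∀ i, ∃ o q', M.h q i o q' ∧ q' ∈ A

/-- The intersection `S/s₁ ∩ S/s₂` contains a complete submachine: a set of (distinct-component)
pairs containing the initial state `(s₁, s₂)` and input-closed in the intersection FSM. -/
def HasCompleteSubmachine (M : FSM S I O) (s₁ s₂ : S) : Prop :=
  ∃ A : Set (S × S), (s₁, s₂) ∈ A ∧ (∀ p ∈ A, p.1 ≠ p.2) ∧ InputClosed M.inter A

/-- One round of the iterative deletion process: keep the states of `A` at which every input
has a transition into `A`. -/
def step (M : FSM S I O) (A : Set S) : Set S :=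
  {q ∈ A | ∀ i, ∃ o q', M.h q i o q' ∧ q' ∈ A}

/-- Survivors of the deletion process after `n` rounds, starting from all states. -/
def surv (M : FSM S I O) : ℕ → Set S
  | 0 => Set.univ
  | n + 1 => step M (surv M n)

/-- Survivors of the deletion process on the intersection FSM after `n` rounds, starting
from all states of the intersection (pairs of distinct states). -/
def interSurv (M : FSM S I O) : ℕ → Set (S × S)
  | 0 => {p | p.1 ≠ p.2}
  | n + 1 => step M.inter (interSurv M n)

/-- The greatest input-closed subset of states of the intersection FSM: the union of all
input-closed sets of distinct-component pairs. -/
def greatestInterClosed (M : FSM S I O) : Set (S × S) :=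
  ⋃₀ {A : Set (S × S) | (∀ p ∈ A, p.1 ≠ p.2) ∧ InputClosed M.inter A}

end FSM

/-!
If `(s₁, s₂)` lies in an input-closed set `A` of pairs of distinct states, then whatever input a
test case applies, some output keeps the pair of current states inside `A`; following such
outputs through the finite acyclic test case ends in a deadlock at which the two states still
differ. Conversely, the pairs outside the greatest input-closed set are those removed by the
iterative deletion process, and the round at which a pair is removed is a rank: some input
sends it, under every output, to a single state or to a pair of smaller rank. Applying such an
input at every pair is a strategy whose reachable part is a finite acyclic homing test case.
-/

namespace FSM

variable {S I O Q : Type}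

section Runs

variable {M : FSM S I O}

lemma Runs.append {s t u : S} {γ δ : List (I × O)} (h₁ : M.Runs s γ t) (h₂ : M.Runs t δ u) :
    M.Runs s (γ ++ δ) u := by
  induction h₁ with
  | nil => exact h₂
  | cons h _ ih => exact .cons h (ih h₂)

lemma Runs.snoc {s t u : S} {γ : List (I × O)} {i : I} {o : O} (h : M.Runs s γ t)
    (ht : M.h t i o u) : M.Runs s (γ ++ [(i, o)]) u :=
  h.append (.cons ht (.nil u))

lemma Runs.eq_of_nil {s t : S} (h : M.Runs s [] t) : t = s := by
  cases h; rfl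

lemma Runs.exists_of_cons {s t : S} {i : I} {o : O} {γ : List (I × O)}
    (h : M.Runs s ((i, o) :: γ) t) : ∃ u, M.h s i o u ∧ M.Runs u γ t := by
  cases h with
  | cons h r => exact ⟨_, h, r⟩

lemma Runs.measure_le (μ : S → ℕ) (hμ : ∀ s i o t, M.h s i o t → μ t < μ s) {s t : S}
    {γ : List (I × O)} (h : M.Runs s γ t) : μ t ≤ μ s := by
  induction h with
  | nil => exact le_rfl
  | cons h _ ih => exact ih.trans (hμ _ _ _ _ h).le

lemma not_runs_self_of_measure (μ : S → ℕ) (hμ : ∀ s i o t, M.h s i o t → μ t < μ s) {s : S}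
    {γ : List (I × O)} (hγ : γ ≠ []) : ¬ M.Runs s γ s := by
  intro h
  cases h with
  | nil => exact hγ rfl
  | cons h r => exact (r.measure_le μ hμ).not_gt (hμ _ _ _ _ h)

lemma wellFounded_of_acyclic [Finite S] (h : ∀ s γ, γ ≠ ([] : List (I × O)) → ¬ M.Runs s γ s) :
    WellFounded (fun t s => ∃ i o, M.h s i o t) := by
  set R : S → S → Prop := fun t s => ∃ i o, M.h s i o t
  have runs_of_transGen {t s : S} (hts : Relation.TransGen R t s) :
      ∃ γ, γ ≠ [] ∧ M.Runs s γ t := by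
    induction hts with
    | single hts =>
      obtain ⟨i, o, hts⟩ := hts
      exact ⟨[(i, o)], List.cons_ne_nil _ _, .cons hts (.nil _)⟩
    | tail _ hbc ih =>
      obtain ⟨γ, -, r⟩ := ih
      obtain ⟨i, o, hbc⟩ := hbc
      exact ⟨(i, o) :: γ, List.cons_ne_nil _ _, .cons hbc r⟩
  have : Std.Irrefl (Relation.TransGen R) :=
    ⟨fun s hs => let ⟨γ, hγ, r⟩ := runs_of_transGen hs; h s γ hγ r⟩
  exact Subrelation.wf Relation.TransGen.single (Finite.wellFounded_of_trans_of_irrefl _)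

end Runs

section ReachablePart

variable {P : FSM Q I O} {q₀ : Q}

def reachablePart (P : FSM Q I O) (q₀ : Q) : FSM {q // ∃ γ, P.Runs q₀ γ q} I O :=
  ⟨fun q i o q' => P.h q i o q'⟩

lemma Runs.of_reachablePart {q q' : {q // ∃ γ, P.Runs q₀ γ q}} {γ : List (I × O)}
    (h : (P.reachablePart q₀).Runs q γ q') : P.Runs q γ q' := by
  induction h with
  | nil => exact .nil _
  | cons h _ ih => exact .cons h ih

lemma Runs.to_reachablePart {q t : Q} {γ : List (I × O)} (h : P.Runs q γ t)
    (hq : ∃ δ, P.Runs q₀ δ q) (ht : ∃ δ, P.Runs q₀ δ t) :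
    (P.reachablePart q₀).Runs ⟨q, hq⟩ γ ⟨t, ht⟩ := by
  induction h with
  | nil => exact .nil _
  | @cons q i o q' γ t h _ ih =>
    have hq' : ∃ δ, P.Runs q₀ δ q' := let ⟨δ, hδ⟩ := hq; ⟨δ ++ [(i, o)], hδ.snoc h⟩
    exact .cons (show (P.reachablePart q₀).h ⟨q, hq⟩ i o ⟨q', hq'⟩ from h) (ih hq' ht)

lemma Deadlock.of_reachablePart {q : {q // ∃ γ, P.Runs q₀ γ q}}
    (h : (P.reachablePart q₀).Deadlock q) : P.Deadlock q := fun i o q' ht =>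
  let ⟨δ, hδ⟩ := q.2
  h i o ⟨q', δ ++ [(i, o)], hδ.snoc ht⟩ ht

lemma IsHomingFor.reachablePart {M : FSM S I O} {S' : Set S} (h : IsHomingFor M S' P q₀) :
    IsHomingFor M S' (P.reachablePart q₀) ⟨q₀, [], .nil q₀⟩ := fun γ q hr hd =>
  h γ q hr.of_reachablePart hd.of_reachablePart

end ReachablePart

section Strategy

def ofStrategy (pick : Q → Option I) (next : Q → I → O → Q) : FSM Q I O :=
  ⟨fun q i o q' => pick q = some i ∧ q' = next q i o⟩

variable {pick : Q → Option I} {next : Q → I → O → Q}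

lemma ofStrategy_pick_eq_none {q : Q} (o : O) (h : (ofStrategy pick next).Deadlock q) :
    pick q = none := by
  cases hq : pick q with
  | none => rfl
  | some i => exact absurd ⟨hq, rfl⟩ (h i o _)

theorem isTestCase_reachablePart_ofStrategy (μ : Q → ℕ)
    (hμ : ∀ q i, pick q = some i → ∀ o, μ (next q i o) < μ q) (q₀ : Q) :
    ((ofStrategy pick next).reachablePart q₀).IsTestCase ⟨q₀, [], .nil q₀⟩ where
  singleInput := by
    rintro q i₁ o₁ q₁ i₂ o₂ q₂ ⟨h₁, -⟩ ⟨h₂, -⟩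
    exact Option.some_injective _ (h₁.symm.trans h₂)
  outputComplete := by
    rintro ⟨q, δ, hδ⟩ i o q' ⟨hi, -⟩ o'
    exact ⟨⟨_, δ ++ [(i, o')], hδ.snoc ⟨hi, rfl⟩⟩, hi, rfl⟩
  observable := by
    rintro q i o t₁ t₂ ⟨-, h₁⟩ ⟨-, h₂⟩
    exact Subtype.ext (h₁.trans h₂.symm)
  acyclic _ _ hγ := not_runs_self_of_measure (μ ∘ Subtype.val)
    (by rintro q i o q' ⟨hi, h⟩; simpa only [Function.comp_apply, h] using hμ _ _ hi o) hγ
  connected := by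
    rintro ⟨q, γ, h⟩
    exact ⟨γ, h.to_reachablePart _ _⟩

theorem adaptivelyHomingSet_of_strategy [Finite Q] {M : FSM S I O} {S' : Set S} (μ : Q → ℕ)
    (hμ : ∀ q i, pick q = some i → ∀ o, μ (next q i o) < μ q) (q₀ : Q)
    (h : IsHomingFor M S' (ofStrategy pick next) q₀) : M.AdaptivelyHomingSet S' :=
  ⟨_, Fintype.ofFinite _, _, _, isTestCase_reachablePart_ofStrategy μ hμ q₀, h.reachablePart⟩

end Strategy

section Deletion

variable (M : FSM S I O)

lemma antitone_interSurv : Antitone M.interSurv :=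
  antitone_nat_of_succ_le fun _ _ hp => hp.1

lemma interSurv_subset_offDiag (n : ℕ) : M.interSurv n ⊆ {p | p.1 ≠ p.2} :=
  M.antitone_interSurv n.zero_le

variable {M}

/-- On a finite machine the deletion process stabilises at an input-closed set. -/
lemma exists_notMem_interSurv [Finite S] {p : S × S} (hp : p ∉ M.greatestInterClosed) :
    ∃ n, p ∉ M.interSurv n := by
  obtain ⟨n, hn⟩ := WellFoundedLT.antitone_chain_condition M.antitone_interSurv
  refine ⟨n, fun hpn => hp ⟨M.interSurv n, ⟨M.interSurv_subset_offDiag n, ?_⟩, hpn⟩⟩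
  intro q hq i
  rw [hn (n + 1) n.le_succ] at hq
  exact hq.2 i

end Deletion

section HomingStrategy

variable (M : FSM S I O)

/-- Where only one of the two states has an `i/o`-successor, or neither has, the pair collapses
to a diagonal pair, at which the test stops. -/
noncomputable def succPair (p : S × S) (i : I) (o : O) : S × S :=
  open Classical in
  if h₁ : ∃ t, M.h p.1 i o t then
    if h₂ : ∃ t, M.h p.2 i o t then (h₁.choose, h₂.choose) else (h₁.choose, h₁.choose)
  else if h₂ : ∃ t, M.h p.2 i o t then (h₂.choose, h₂.choose) else (p.1, p.1)

/-- The round of the deletion process that removes `p` (junk value `0` if it is never removed). -/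
noncomputable def rank (p : S × S) : ℕ := sInf {n | p ∉ M.interSurv n}

def IsRankReducing (p : S × S) (i : I) : Prop :=
  ∀ o, ∃ n < M.rank p, M.succPair p i o ∉ M.interSurv n

noncomputable def homingInput (p : S × S) : Option I :=
  open Classical in
  if h : ∃ i, M.IsRankReducing p i then some h.choose else none

noncomputable def homingStrategy : FSM (S × S) I O := ofStrategy M.homingInput M.succPair

variable {M}

lemma succPair_fst (ho : M.Observable) {p : S × S} {i : I} {o : O} {t : S}
    (ht : M.h p.1 i o t) : (M.succPair p i o).1 = t := by
  have h₁ : ∃ t, M.h p.1 i o t := ⟨t, ht⟩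
  unfold succPair
  split_ifs
  all_goals exact ho _ _ _ _ _ h₁.choose_spec ht

lemma succPair_snd (ho : M.Observable) {p : S × S} {i : I} {o : O} {t : S}
    (ht : M.h p.2 i o t) : (M.succPair p i o).2 = t := by
  have h₂ : ∃ t, M.h p.2 i o t := ⟨t, ht⟩
  unfold succPair
  split_ifs
  all_goals exact ho _ _ _ _ _ h₂.choose_spec ht

lemma inter_succPair {p : S × S} {i : I} {o : O}
    (hne : (M.succPair p i o).1 ≠ (M.succPair p i o).2) : M.inter.h p i o (M.succPair p i o) := by
  unfold succPair at *
  split_ifs at * with h₁ h₂ h₂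
  · exact ⟨h₁.choose_spec, h₂.choose_spec, hne⟩
  all_goals exact absurd rfl hne

lemma exists_isRankReducing {p : S × S} {n : ℕ} (hp : p ∉ M.interSurv n) (hne : p.1 ≠ p.2) :
    ∃ i, M.IsRankReducing p i := by
  have hrank : p ∉ M.interSurv (M.rank p) := Nat.sInf_mem (s := {n | p ∉ M.interSurv n}) ⟨n, hp⟩
  obtain ⟨m, hm⟩ : ∃ m, M.rank p = m + 1 :=
    Nat.exists_eq_succ_of_ne_zero fun h => hrank (h ▸ hne)
  have hpm : p ∈ M.interSurv m :=
    not_not.mp (Nat.notMem_of_lt_sInf (s := {n | p ∉ M.interSurv n}) (show m < M.rank p by omega))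
  rw [hm] at hrank
  obtain ⟨i, hi⟩ : ∃ i, ∀ o q, M.inter.h p i o q → q ∉ M.interSurv m := by
    simpa [interSurv, step, hpm] using hrank
  refine ⟨i, fun o => ?_⟩
  by_cases hdiag : (M.succPair p i o).1 = (M.succPair p i o).2
  · exact ⟨0, hm ▸ m.succ_pos, fun h => h hdiag⟩
  · exact ⟨m, hm ▸ m.lt_succ_self, hi o _ (inter_succPair hdiag)⟩

lemma homingInput_ne_none {p : S × S} (h : ∃ i, M.IsRankReducing p i) :
    M.homingInput p ≠ none := by
  simp [homingInput, h]

lemma IsRankReducing.of_homingInput {p : S × S} {i : I} (h : M.homingInput p = some i) :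
    M.IsRankReducing p i := by
  unfold homingInput at h
  split_ifs at h with hex
  exact Option.some_injective _ h ▸ hex.choose_spec

lemma IsRankReducing.rank_lt {p : S × S} {i : I} (h : M.IsRankReducing p i) (o : O) :
    M.rank (M.succPair p i o) < M.rank p :=
  let ⟨_, hn, hp⟩ := h o
  (Nat.sInf_le hp).trans_lt hn

lemma runs_eq_of_homingStrategy_runs (ho : M.Observable) {p q : S × S} {γ : List (I × O)}
    (h : M.homingStrategy.Runs p γ q) :
    (∀ t, M.Runs p.1 γ t → t = q.1) ∧ (∀ t, M.Runs p.2 γ t → t = q.2) := by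
  induction h with
  | nil => exact ⟨fun t ht => ht.eq_of_nil, fun t ht => ht.eq_of_nil⟩
  | cons h _ ih =>
    obtain ⟨-, rfl⟩ := h
    refine ⟨fun t ht => ?_, fun t ht => ?_⟩
    · obtain ⟨u, hu, hr⟩ := ht.exists_of_cons
      exact ih.1 t (succPair_fst ho hu ▸ hr)
    · obtain ⟨u, hu, hr⟩ := ht.exists_of_cons
      exact ih.2 t (succPair_snd ho hu ▸ hr)

lemma exists_notMem_of_homingStrategy_runs {p q : S × S} {γ : List (I × O)}
    (h : M.homingStrategy.Runs p γ q) (hp : ∃ n, p ∉ M.interSurv n) : ∃ n, q ∉ M.interSurv n := by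
  induction h with
  | nil => exact hp
  | cons h _ ih =>
    obtain ⟨hi, rfl⟩ := h
    exact ih (let ⟨n, _, hn⟩ := IsRankReducing.of_homingInput hi _; ⟨n, hn⟩)

lemma eq_of_homingStrategy_deadlock (hc : M.Complete) {q : S × S} (hq : ∃ n, q ∉ M.interSurv n)
    (hd : M.homingStrategy.Deadlock q) : q.1 = q.2 := by
  by_contra hne
  obtain ⟨n, hn⟩ := hq
  obtain ⟨i, hi⟩ := exists_isRankReducing hn hne
  obtain ⟨o, -⟩ := hc q.1 i
  exact homingInput_ne_none ⟨i, hi⟩ (ofStrategy_pick_eq_none o hd)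

theorem isHomingFor_homingStrategy (hc : M.Complete) (ho : M.Observable) {s₁ s₂ : S}
    (h : ∃ n, (s₁, s₂) ∉ M.interSurv n) :
    IsHomingFor M {s₁, s₂} M.homingStrategy (s₁, s₂) := by
  intro γ q hr hd
  have hq := eq_of_homingStrategy_deadlock hc (exists_notMem_of_homingStrategy_runs hr h) hd
  obtain ⟨h₁, h₂⟩ := runs_eq_of_homingStrategy_runs ho hr
  refine ⟨q.1, ?_⟩
  rintro s (rfl | rfl) t ht
  · exact h₁ t ht
  · exact (h₂ t ht).trans hq.symm

theorem adaptivelyHomingPair_of_notMem [Finite S] (hc : M.Complete) (ho : M.Observable)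
    {s₁ s₂ : S} (h : (s₁, s₂) ∉ M.greatestInterClosed) : M.AdaptivelyHomingPair s₁ s₂ :=
  adaptivelyHomingSet_of_strategy M.rank (fun _ _ hi => (IsRankReducing.of_homingInput hi).rank_lt)
    (s₁, s₂) (isHomingFor_homingStrategy hc ho (exists_notMem_interSurv h))

end HomingStrategy

theorem IsTestCase.not_isHomingFor_of_inputClosed [Finite Q] {M : FSM S I O} {P : FSM Q I O}
    {q₀ : Q} (hP : P.IsTestCase q₀) {A : Set (S × S)} (hA : ∀ p ∈ A, p.1 ≠ p.2)
    (hAc : InputClosed M.inter A) {s₁ s₂ : S} (hs : (s₁, s₂) ∈ A) :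
    ¬ IsHomingFor M {s₁, s₂} P q₀ := by
  intro hhom
  suffices ∀ q γ p, p ∈ A → P.Runs q₀ γ q → M.Runs s₁ γ p.1 → M.Runs s₂ γ p.2 → False from
    this q₀ [] _ hs (.nil _) (.nil _) (.nil _)
  intro q
  induction q using (wellFounded_of_acyclic hP.acyclic).induction with
  | _ q ih =>
  intro γ p hp hq h₁ h₂
  by_cases hd : P.Deadlock q
  · obtain ⟨s, hs⟩ := hhom γ q hq hd
    exact hA p hp ((hs s₁ (.inl rfl) _ h₁).trans (hs s₂ (.inr rfl) _ h₂).symm)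
  · obtain ⟨i, o₀, q₁, hq₁⟩ : ∃ i o q', P.h q i o q' := by simpa [Deadlock] using hd
    obtain ⟨o, p', ⟨hp₁, hp₂, -⟩, hp'⟩ := hAc p hp i
    obtain ⟨q', hq'⟩ := hP.outputComplete q i o₀ q₁ hq₁ o
    exact ih q' ⟨i, o, hq'⟩ _ p' hp' (hq.snoc hq') (h₁.snoc hp₁) (h₂.snoc hp₂)

theorem not_adaptivelyHomingPair_of_mem {M : FSM S I O} {s₁ s₂ : S}
    (h : (s₁, s₂) ∈ M.greatestInterClosed) : ¬ M.AdaptivelyHomingPair s₁ s₂ := by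
  rintro ⟨Q, _, P, q₀, hP, hhom⟩
  obtain ⟨A, ⟨hA, hAc⟩, hs⟩ := h
  exact hP.not_isHomingFor_of_inputClosed hA hAc hs hhom

end FSM

theorem adaptively_homing_iff_not_in_greatest_closed_general
    {S I O : Type} [Fintype S]
    (M : FSM S I O) (hc : M.Complete) (ho : M.Observable) (s₁ s₂ : S) :
    M.AdaptivelyHomingPair s₁ s₂ ↔ (s₁, s₂) ∉ M.greatestInterClosed :=
  ⟨fun h hmem => FSM.not_adaptivelyHomingPair_of_mem hmem h,
    FSM.adaptivelyHomingPair_of_notMem hc ho⟩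

/-- the pair `(s₁, s₂)` is adaptively homing iff `(s₁, s₂)` does not belong to
the greatest input-closed subset of states of the intersection `S/s₁ ∩ S/s₂`. -/
theorem adaptively_homing_iff_not_in_greatest_closed
    {S I O : Type} [Fintype S] [Fintype I] [Fintype O]
    (M : FSM S I O) (hc : M.Complete) (ho : M.Observable) (s₁ s₂ : S) (hne : s₁ ≠ s₂) :
    M.AdaptivelyHomingPair s₁ s₂ ↔ (s₁, s₂) ∉ M.greatestInterClosed :=
  adaptively_homing_iff_not_in_greatest_closed_general M hc ho s₁ s₂
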